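/- The function g(x,y) = (x - y) * log(x / y) defined on positive reals is nonnegative, symmetric in its arguments, and jointly convex. -/
import Mathlib

lemma combo_pos {a b u v : ℝ} (ha : 0 ≤ a) (hb : 0 ≤ b) (hab : a + b = 1)
    (hu : 0 < u) (hv : 0 < v) : 0 < a * u + b * v := by
  rcases ha.lt_or_eq with h | h
  · nlinarith [mul_nonneg hb hv.le, mul_pos h hu]
  · have hb1 : b = 1 := by linarith
    simp [← h, hb1, hv]

lemma key_tangent (x y c : ℝ) (hx : 0 < x) (hy : 0 < y) :
    c * x - y * Real.exp (c - 1) ≤ x * Real.log (x / y) := by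
  have hxy : 0 < x / y := div_pos hx hy
  have h := Real.add_one_le_exp (c - 1 - Real.log (x / y))
  rw [Real.exp_sub, Real.exp_log hxy] at h
  have h2 := (le_div_iff₀ hxy).mp h
  have h3 := mul_le_mul_of_nonneg_right h2 hy.le
  have hxy2 : x / y * y = x := div_mul_cancel₀ x hy.ne'
  have h4 : (c - 1 - Real.log (x / y) + 1) * x ≤ Real.exp (c - 1) * y := by
    calc (c - 1 - Real.log (x / y) + 1) * x
        = (c - 1 - Real.log (x / y) + 1) * (x / y) * y := by rw [mul_assoc, hxy2]
      _ ≤ Real.exp (c - 1) * y := h3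
  nlinarith [h4]

lemma g_split (x y : ℝ) (hx : 0 < x) (hy : 0 < y) :
    (x - y) * Real.log (x / y) = x * Real.log (x / y) + y * Real.log (y / x) := by
  rw [Real.log_div hx.ne' hy.ne', Real.log_div hy.ne' hx.ne']
  ring

theorem g_nonneg_symm_convex
    (g : ℝ × ℝ → ℝ) (hg : g = fun q => (q.1 - q.2) * Real.log (q.1 / q.2)) :
    (∀ x y : ℝ, 0 < x → 0 < y → 0 ≤ g (x, y)) ∧
    (∀ x y : ℝ, 0 < x → 0 < y → g (x, y) = g (y, x)) ∧
    ConvexOn ℝ {q : ℝ × ℝ | 0 < q.1 ∧ 0 < q.2} g := by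
  subst hg
  refine ⟨?_, ?_, ?_⟩
  · intro x y hx hy
    simp only
    rcases le_total y x with h | h
    · exact mul_nonneg (by linarith) (Real.log_nonneg ((one_le_div hy).2 h))
    · have h1 : x - y ≤ 0 := by linarith
      have h2 : Real.log (x / y) ≤ 0 :=
        Real.log_nonpos (div_pos hx hy).le ((div_le_one hy).2 h)
      nlinarith [mul_nonneg (neg_nonneg.2 h1) (neg_nonneg.2 h2)]
  · intro x y hx hy
    simp only [Real.log_div hx.ne' hy.ne', Real.log_div hy.ne' hx.ne']
    ring
  · constructor
    · intro p hp q hq a b ha hb hab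
      exact ⟨combo_pos ha hb hab hp.1 hq.1, combo_pos ha hb hab hp.2 hq.2⟩
    · rintro ⟨x1, y1⟩ ⟨hx1, hy1⟩ ⟨x2, y2⟩ ⟨hx2, hy2⟩ a b ha hb hab
      simp only [Prod.smul_mk, Prod.mk_add_mk, smul_eq_mul] at *
      set X := a * x1 + b * x2 with hX
      set Y := a * y1 + b * y2 with hY
      have hXpos : 0 < X := combo_pos ha hb hab hx1 hx2
      have hYpos : 0 < Y := combo_pos ha hb hab hy1 hy2
      set c1 := 1 + Real.log (X / Y) with hc1
      set c2 := 1 + Real.log (Y / X) with hc2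
      have he1 : Real.exp (c1 - 1) = X / Y := by
        rw [hc1]; simp [Real.exp_log (div_pos hXpos hYpos)]
      have he2 : Real.exp (c2 - 1) = Y / X := by
        rw [hc2]; simp [Real.exp_log (div_pos hYpos hXpos)]
      have k1 := key_tangent x1 y1 c1 hx1 hy1
      have k2 := key_tangent x2 y2 c1 hx2 hy2
      have k3 := key_tangent y1 x1 c2 hy1 hx1
      have k4 := key_tangent y2 x2 c2 hy2 hx2
      rw [g_split x1 y1 hx1 hy1, g_split x2 y2 hx2 hy2, g_split X Y hXpos hYpos]
      have hXY : Real.log (Y / X) = - Real.log (X / Y) := by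
        rw [← Real.log_inv, inv_div]
      have key : X * Real.log (X / Y) + Y * Real.log (Y / X)
          = c1 * X - Y * Real.exp (c1 - 1) + (c2 * Y - X * Real.exp (c2 - 1)) := by
        rw [he1, he2, hc1, hc2, hXY]
        field_simp
        ring
      rw [key]
      nlinarith [mul_le_mul_of_nonneg_left k1 ha, mul_le_mul_of_nonneg_left k2 hb,
        mul_le_mul_of_nonneg_left k3 ha, mul_le_mul_of_nonneg_left k4 hb]
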